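/- Let X be a topological space and H : X × [0,1] → ℝ^m continuous such that for every t ∈ [0,1] the map H(·,t) is injective. Then there is a continuous map G : X̃ × [0,1] → S^{m−1} (where X̃ = {(x,y) : x ≠ y} and S^{m−1} is the unit sphere of ℝ^m) such that G((x,y),0) and G((x,y),1) are the Gauss maps of H(·,0) and H(·,1) respectively, and G((y,x),t) = −G((x,y),t) for all x ≠ y and t. In particular, the Gauss maps of the two ends of the isotopy are equivariantly homotopic. -/

import Mathlib

/-!
The homotopy is the Gauss map taken slice by slice: normalize the chord `H (x, t) - H (y, t)`,
which never vanishes because every slice is injective. Swapping `x` and `y` negates the chord,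
hence its normalization.
-/

open NormedSpace

theorem Continuous.normalize {X E : Type*} [TopologicalSpace X] [NormedAddCommGroup E]
    [NormedSpace ℝ E] {f : X → E} (hf : Continuous f) (hf0 : ∀ x, f x ≠ 0) :
    Continuous fun x => NormedSpace.normalize (f x) :=
  (hf.norm.inv₀ fun x => norm_ne_zero_iff.mpr (hf0 x)).smul hf

theorem sub_ne_zero_of_injective_slices {X T E : Type*} [AddGroup E] {H : X × T → E}
    (hinj : ∀ t, Function.Injective fun x => H (x, t)) (q : {p : X × X // p.1 ≠ p.2} × T) :
    H (q.1.1.1, q.2) - H (q.1.1.2, q.2) ≠ 0 :=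
  sub_ne_zero.mpr fun h => q.1.2 (hinj q.2 h)

section GaussHomotopy

variable {X T E : Type*} [NormedAddCommGroup E] [NormedSpace ℝ E]

noncomputable def gaussHomotopy (H : X × T → E) (q : {p : X × X // p.1 ≠ p.2} × T) : E :=
  normalize (H (q.1.1.1, q.2) - H (q.1.1.2, q.2))

variable {H : X × T → E}

theorem norm_gaussHomotopy (hinj : ∀ t, Function.Injective fun x => H (x, t))
    (q : {p : X × X // p.1 ≠ p.2} × T) : ‖gaussHomotopy H q‖ = 1 :=
  norm_normalize (sub_ne_zero_of_injective_slices hinj q)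

theorem gaussHomotopy_swap (x y : X) (h : x ≠ y) (t : T) :
    gaussHomotopy H (⟨(y, x), h.symm⟩, t) = -gaussHomotopy H (⟨(x, y), h⟩, t) := by
  rw [gaussHomotopy, gaussHomotopy, ← neg_sub, normalize_neg]

theorem continuous_gaussHomotopy [TopologicalSpace X] [TopologicalSpace T] (hH : Continuous H)
    (hinj : ∀ t, Function.Injective fun x => H (x, t)) : Continuous (gaussHomotopy H) := by
  have hpair : Continuous fun q : {p : X × X // p.1 ≠ p.2} × T => q.1.1 :=
    continuous_subtype_val.comp continuous_fst
  exact ((hH.comp (hpair.fst.prodMk continuous_snd)).sub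
    (hH.comp (hpair.snd.prodMk continuous_snd))).normalize
    (sub_ne_zero_of_injective_slices hinj)

end GaussHomotopy

theorem stmt1_general {X : Type*} [TopologicalSpace X] (m : ℕ)
    (H : X × unitInterval → EuclideanSpace ℝ (Fin m)) (hH : Continuous H)
    (hinj : ∀ t : unitInterval, Function.Injective (fun x => H (x, t))) :
    ∃ G : {p : X × X // p.1 ≠ p.2} × unitInterval → EuclideanSpace ℝ (Fin m),
      Continuous G ∧
      (∀ p t, ‖G (p, t)‖ = 1) ∧
      (∀ p : {p : X × X // p.1 ≠ p.2},
        G (p, 0) = ‖H (p.1.1, 0) - H (p.1.2, 0)‖⁻¹ • (H (p.1.1, 0) - H (p.1.2, 0)) ∧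
        G (p, 1) = ‖H (p.1.1, 1) - H (p.1.2, 1)‖⁻¹ • (H (p.1.1, 1) - H (p.1.2, 1))) ∧
      (∀ (x y : X) (h : x ≠ y) (t : unitInterval),
        G (⟨(y, x), Ne.symm h⟩, t) = - G (⟨(x, y), h⟩, t)) :=
  ⟨gaussHomotopy H, continuous_gaussHomotopy hH hinj, fun p t => norm_gaussHomotopy hinj (p, t),
    fun _ => ⟨rfl, rfl⟩, gaussHomotopy_swap⟩

/-- If `H` is a continuous homotopy all of whose time slices are injective, then the
Gauss maps of the two ends are connected by a continuous equivariant sphere-valued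
homotopy on the deleted product. -/
theorem stmt1 {X : Type*} [TopologicalSpace X] (m : ℕ) (hm : 1 ≤ m)
    (H : X × unitInterval → EuclideanSpace ℝ (Fin m)) (hH : Continuous H)
    (hinj : ∀ t : unitInterval, Function.Injective (fun x => H (x, t))) :
    ∃ G : {p : X × X // p.1 ≠ p.2} × unitInterval → EuclideanSpace ℝ (Fin m),
      Continuous G ∧
      (∀ p t, ‖G (p, t)‖ = 1) ∧
      (∀ p : {p : X × X // p.1 ≠ p.2},
        G (p, 0) = ‖H (p.1.1, 0) - H (p.1.2, 0)‖⁻¹ • (H (p.1.1, 0) - H (p.1.2, 0)) ∧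
        G (p, 1) = ‖H (p.1.1, 1) - H (p.1.2, 1)‖⁻¹ • (H (p.1.1, 1) - H (p.1.2, 1))) ∧
      (∀ (x y : X) (h : x ≠ y) (t : unitInterval),
        G (⟨(y, x), Ne.symm h⟩, t) = - G (⟨(x, y), h⟩, t)) :=
  stmt1_general m H hH hinj
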